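/- For every y ∈ (0,1) and every real number x with erfc(x) = y, one has x < √(ln(2/(√(8y + 1) − 1))). (That is, inverfc(y) < √(ln(2/(√(8y+1) − 1))) for all 0 < y < 1.) -/

import Mathlib

open Real

/-- The Gauss error function `erf x = (2/√π) ∫₀ˣ e^{−t²} dt`. -/
noncomputable def erf (x : ℝ) : ℝ := 2 / Real.sqrt Real.pi * ∫ t in (0:ℝ)..x, Real.exp (-t ^ 2)

/-- The complementary error function `erfc x = 1 - erf x`. -/
noncomputable def erfc (x : ℝ) : ℝ := 1 - erf x

/-!
Write `u = exp (-x ^ 2)`. Solving the quadratic inequality `2 y < u + u ^ 2` for `u` gives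
`u > (√(8 y + 1) - 1) / 2`, which is the claim, so it suffices to show `2 erfc x < u + u ^ 2`
for `x > 0`. The gap `(u + u ^ 2) / 2 - erfc x` vanishes at `0` and at `∞`, and its derivative is
`u · g x` with `g x = 2 / √π - x - 2 x u`, which is strictly decreasing because
`4 s - 2 < exp s`. Hence the gap first increases and then decreases, so it is positive on `(0, ∞)`.
-/

open Filter Topology Set

lemma pos_of_hasDerivAt_mul_strictAnti {f w g : ℝ → ℝ} {a x : ℝ}
    (hf : ∀ t, HasDerivAt f (w t * g t) t) (hw : ∀ t, 0 < w t) (hg : StrictAnti g)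
    (hfa : f a = 0) (hlim : Tendsto f atTop (𝓝 0)) (hx : a < x) : 0 < f x := by
  have hcont : Continuous f := continuous_iff_continuousAt.2 fun t => (hf t).continuousAt
  rcases le_or_gt 0 (g x) with hgx | hgx
  · have hmono : StrictMonoOn f (Icc a x) :=
      strictMonoOn_of_hasDerivWithinAt_pos (convex_Icc a x) hcont.continuousOn
        (fun t _ => (hf t).hasDerivWithinAt) fun t ht => by
          rw [interior_Icc] at ht
          exact mul_pos (hw t) (hgx.trans_lt (hg ht.2))
    simpa [hfa] using hmono (left_mem_Icc.2 hx.le) (right_mem_Icc.2 hx.le) hx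
  · have hanti : StrictAntiOn f (Ici x) :=
      strictAntiOn_of_hasDerivWithinAt_neg (convex_Ici x) hcont.continuousOn
        (fun t _ => (hf t).hasDerivWithinAt) fun t ht => by
          rw [interior_Ici] at ht
          exact mul_neg_of_pos_of_neg (hw t) ((hg ht).trans hgx)
    have hnext : 0 ≤ f (x + 1) :=
      le_of_tendsto hlim (eventually_atTop.2 ⟨x + 1, fun t ht =>
        hanti.antitoneOn (mem_Ici.2 (by linarith)) (mem_Ici.2 (by linarith)) ht⟩)
    exact hnext.trans_lt (hanti self_mem_Ici (mem_Ici.2 (by linarith)) (lt_add_one x))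

lemma four_mul_sub_two_lt_exp (s : ℝ) : 4 * s - 2 < exp s := by
  rcases lt_or_ge s 0 with hs | hs
  · linarith [exp_pos s]
  · have := sum_le_exp_of_nonneg hs 4
    simp only [Finset.sum_range_succ, Finset.sum_range_zero, Nat.factorial] at this
    norm_num at this
    nlinarith [sq_nonneg (s - 3 / 2), mul_nonneg hs (sq_nonneg (s - 3 / 2))]

lemma hasDerivAt_exp_neg_sq (x : ℝ) :
    HasDerivAt (fun t => exp (-t ^ 2)) (-2 * x * exp (-x ^ 2)) x := by
  convert (hasDerivAt_pow 2 x).fun_neg.exp using 1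
  push_cast
  ring

lemma tendsto_exp_neg_sq_atTop : Tendsto (fun t : ℝ => exp (-t ^ 2)) atTop (𝓝 0) :=
  tendsto_exp_atBot.comp (tendsto_neg_atTop_atBot.comp (tendsto_pow_atTop two_ne_zero))

lemma hasDerivAt_erfc (x : ℝ) : HasDerivAt erfc (-(2 / √π * exp (-x ^ 2))) x :=
  (((by fun_prop : Continuous fun t : ℝ => exp (-t ^ 2)).integral_hasStrictDerivAt 0 x).hasDerivAt
    |>.const_mul (2 / √π)).const_sub 1

lemma erfc_zero : erfc 0 = 1 := by simp [erfc, erf]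

lemma strictAnti_erfc : StrictAnti erfc :=
  strictAnti_of_hasDerivAt_neg hasDerivAt_erfc fun x => by
    have := sqrt_pos.2 pi_pos
    simp only [neg_lt_zero]
    positivity

lemma tendsto_erfc_atTop : Tendsto erfc atTop (𝓝 0) := by
  have hintegrable : MeasureTheory.IntegrableOn (fun t : ℝ => exp (-t ^ 2)) (Ioi 0) := by
    simpa using (integrable_exp_neg_mul_sq one_pos).integrableOn (s := Ioi (0 : ℝ))
  have hlim := MeasureTheory.intervalIntegral_tendsto_integral_Ioi 0 hintegrable tendsto_id
  have hval : ∫ t in Ioi (0 : ℝ), exp (-t ^ 2) = √π / 2 := by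
    simpa using integral_gaussian_Ioi 1
  rw [hval] at hlim
  have hpi : √π ≠ 0 := (sqrt_pos.2 pi_pos).ne'
  have h := (hlim.const_mul (2 / √π)).const_sub 1
  rwa [show (1 : ℝ) - 2 / √π * (√π / 2) = 0 by field_simp; ring] at h

lemma strictAnti_two_div_sqrt_pi_sub_sub_mul_exp_neg_sq :
    StrictAnti fun x : ℝ => 2 / √π - x - 2 * x * exp (-x ^ 2) := by
  refine strictAnti_of_hasDerivAt_neg (f' := fun x => -1 + exp (-x ^ 2) * (4 * x ^ 2 - 2))
    (fun x => ?_) fun x => ?_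
  · refine (((hasDerivAt_id x).const_sub (2 / √π)).sub
      (((hasDerivAt_id x).const_mul 2).mul (hasDerivAt_exp_neg_sq x))).congr_deriv ?_
    simp only [id]
    ring
  · have h := mul_lt_mul_of_pos_left (four_mul_sub_two_lt_exp (x ^ 2)) (exp_pos (-x ^ 2))
    rw [← exp_add, neg_add_cancel, exp_zero] at h
    linarith

lemma erfc_lt_of_pos {x : ℝ} (hx : 0 < x) :
    erfc x < (exp (-x ^ 2) + exp (-x ^ 2) ^ 2) / 2 := by
  have hderiv (t : ℝ) : HasDerivAt (fun t => (exp (-t ^ 2) + exp (-t ^ 2) ^ 2) / 2 - erfc t)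
      (exp (-t ^ 2) * (2 / √π - t - 2 * t * exp (-t ^ 2))) t := by
    have hu := hasDerivAt_exp_neg_sq t
    refine (((hu.add (hu.pow 2)).div_const 2).sub (hasDerivAt_erfc t)).congr_deriv ?_
    push_cast
    ring
  have hlim : Tendsto (fun t => (exp (-t ^ 2) + exp (-t ^ 2) ^ 2) / 2 - erfc t) atTop (𝓝 0) := by
    have hu := tendsto_exp_neg_sq_atTop
    simpa using ((hu.add (hu.pow 2)).div_const 2).sub tendsto_erfc_atTop
  have := pos_of_hasDerivAt_mul_strictAnti hderiv (fun t => exp_pos _)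
    strictAnti_two_div_sqrt_pi_sub_sub_mul_exp_neg_sq (by norm_num [erfc_zero]) hlim hx
  linarith

/-- For every `y ∈ (0,1)` and every real `x` with `erfc x = y`,
`x < √(ln(2/(√(8y + 1) − 1)))`. -/
theorem inverfc_lt_sqrt_log (y x : ℝ) (hy0 : 0 < y) (hy1 : y < 1) (hx : erfc x = y) :
    x < Real.sqrt (Real.log (2 / (Real.sqrt (8 * y + 1) - 1))) := by
  have hx0 : 0 < x := strictAnti_erfc.lt_iff_gt.1 (by rwa [hx, erfc_zero])
  set u := exp (-x ^ 2) with hu_def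
  have hbound : 2 * y < u + u ^ 2 := by linarith [hx ▸ erfc_lt_of_pos hx0]
  have hroot : √(8 * y + 1) - 1 < 2 * u := by
    rw [sub_lt_iff_lt_add, sqrt_lt' (by positivity)]
    nlinarith
  have hpos : 0 < √(8 * y + 1) - 1 := by
    rw [sub_pos, lt_sqrt zero_le_one]
    linarith
  have hexp : exp (x ^ 2) < 2 / (√(8 * y + 1) - 1) := by
    rw [lt_div_iff₀ hpos]
    calc exp (x ^ 2) * (√(8 * y + 1) - 1) < exp (x ^ 2) * (2 * u) :=
          mul_lt_mul_of_pos_left hroot (exp_pos _)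
      _ = 2 := by rw [hu_def, mul_left_comm, ← exp_add, add_neg_cancel, exp_zero, mul_one]
  rw [lt_sqrt hx0.le, lt_log_iff_exp_lt (by positivity)]
  exact hexp
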